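/- Let A be an n×n complex matrix given in ordered form with m distinct rows occurring with multiplicities p₁ ≤ ⋯ ≤ p_m (p₁+⋯+p_m = n), and let 𝒮(A) be the m×m matrix of block row sums: 𝒮_{jk}(A) = ∑_{ℓ = p₁+⋯+p_{k−1}+1}^{p₁+⋯+p_k} a_{p₁+⋯+p_j, ℓ}. Then A is universal if and only if all principal minors of 𝒮(A) vanish. -/

import Mathlib

open Matrix BigOperators

/-- Jacobian determinant of a map `f : ℂ^ι → ℂ^ι` at `x`. -/
noncomputable def jacDet {ι : Type*} [Fintype ι] [DecidableEq ι]
    (f : (ι → ℂ) → (ι → ℂ)) (x : ι → ℂ) : ℂ :=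
  (LinearMap.toMatrix (Pi.basisFun ℂ ι) (Pi.basisFun ℂ ι)
    (fderiv ℂ f x).toLinearMap).det

/-- The map `x ↦ x + φ(Ax)`, with `φ` applied entrywise. -/
noncomputable def phiMap {ι : Type*} [Fintype ι] (A : Matrix ι ι ℂ) (φ : ℂ → ℂ)
    (x : ι → ℂ) : ι → ℂ :=
  fun j => x j + φ (A.mulVec x j)

/-- Domain of definition of `x ↦ x + φ(Ax)` for `φ` defined on `Ω`. -/
def phiDom {ι : Type*} [Fintype ι] (A : Matrix ι ι ℂ) (Ω : Set ℂ) : Set (ι → ℂ) :=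
  {x | ∀ j, A.mulVec x j ∈ Ω}

/-- `(A, φ)` is a good pair: the Jacobian of `x + φ(Ax)` is identically a nonzero constant. -/
def IsGoodPair {ι : Type*} [Fintype ι] [DecidableEq ι]
    (A : Matrix ι ι ℂ) (Ω : Set ℂ) (φ : ℂ → ℂ) : Prop :=
  ∃ c : ℂ, c ≠ 0 ∧ ∀ x ∈ phiDom A Ω, jacDet (phiMap A φ) x = c

/-- A matrix is universal if it forms a good pair with every analytic function. -/
def IsUniversal {ι : Type*} [Fintype ι] [DecidableEq ι] (A : Matrix ι ι ℂ) : Prop :=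
  ∀ (Ω : Set ℂ) (φ : ℂ → ℂ), IsOpen Ω → Ω.Nonempty → IsPreconnected Ω →
    AnalyticOn ℂ φ Ω → (phiDom A Ω).Nonempty → IsGoodPair A Ω φ

/-- The principal minor of `A` indexed by `I`. -/
noncomputable def principalMinor {ι : Type*} [DecidableEq ι] (A : Matrix ι ι ℂ)
    (I : Finset ι) : ℂ :=
  (A.submatrix (fun i : I => (i : ι)) (fun i : I => (i : ι))).det

/-!
The Jacobian of `x ↦ x + φ(Ax)` is `det (1 + D A)` with `D = diag (φ' (A x))`. Writing `A = P R`,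
where `R` lists the distinct rows and `P` is the 0/1 matrix of the blocks, Sylvester's identity
`det (1 + X Y) = det (1 + Y X)` turns this into `det (1 + D' 𝒮)` with `𝒮 = R P` and
`D' = diag (φ' (R x))`, and multilinearity of the determinant expands it as
`∑_I (∏_{k ∈ I} φ' ((R x)_k)) · 𝒮[I, I]`. If every nonempty principal minor vanishes, the Jacobian
is identically `1`. Conversely, choose `x₀` at which the values `(R x₀)_k` of the nonzero rows are
distinct and nonzero, and a polynomial `φ` with `φ' (0) = 0` and `φ' ((R x₀)_k) = [k ∈ J]`.
Comparing the Jacobian at `0` and at `x₀` gives `∑_{I ⊆ J} 𝒮[I, I] = 1 = 𝒮[∅, ∅]`, so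
`𝒮[J, J] = 0` by induction on `J`; a zero row of `R` gives a zero row of `𝒮`.
-/

open Finset Polynomial

section Minors

variable {κ : Type*} [DecidableEq κ]

theorem principalMinor_empty (S : Matrix κ κ ℂ) : principalMinor S ∅ = 1 :=
  det_isEmpty

theorem principalMinor_eq_zero_of_row_eq_zero {S : Matrix κ κ ℂ} {I : Finset κ} {k : κ}
    (hk : k ∈ I) (hS : S k = 0) : principalMinor S I = 0 :=
  det_eq_zero_of_row_eq_zero ⟨k, hk⟩ fun j => congrFun hS j

theorem Finset.eq_zero_of_sum_powerset_eq {M : Type*} [AddCommGroup M] {f : Finset κ → M}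
    {K : Finset κ} (hf : ∀ J ⊆ K, ∑ I ∈ J.powerset, f I = f ∅) {J : Finset κ} (hJK : J ⊆ K)
    (hJ : J.Nonempty) : f J = 0 := by
  induction J using Finset.strongInduction with
  | H J ih =>
    have hsub : ∑ I ∈ J.ssubsets, f I = f ∅ :=
      sum_eq_single_of_mem ∅ (empty_mem_ssubsets hJ) fun I hI hI0 =>
        ih I (mem_ssubsets.1 hI) ((mem_ssubsets.1 hI).subset.trans hJK)
          (nonempty_iff_ne_empty.2 hI0)
    have := hf J hJK
    rwa [← add_sum_erase _ _ (mem_powerset_self J), ← ssubsets, hsub, add_eq_right] at this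

variable [Fintype κ]

theorem det_one_add_diagonal_mul (S : Matrix κ κ ℂ) (g : κ → ℂ) :
    det (1 + diagonal g * S) = ∑ I : Finset κ, (∏ k ∈ I, g k) * principalMinor S I := by
  have hsplit : (1 + diagonal g * S : Matrix κ κ ℂ) =
      of ((fun k => g k • S k) + fun k => (1 : Matrix κ κ ℂ) k) := by
    ext i j
    simp [diagonal_mul, add_comm]
  rw [hsplit]
  refine ((detRowAlternating (n := κ) (R := ℂ)).toMultilinearMap.map_add_univ _ _).trans
    (sum_congr rfl fun I _ => ?_)
  have hpw : I.piecewise (fun k => g k • S k) (fun k => (1 : Matrix κ κ ℂ) k) =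
      I.piecewise (fun k => g k • I.piecewise S.row (1 : Matrix κ κ ℂ).row k)
        (I.piecewise S.row (1 : Matrix κ κ ℂ).row) := by
    ext k j
    by_cases hk : k ∈ I <;> simp [hk, row, Finset.piecewise]
  rw [hpw, MultilinearMap.map_piecewise_smul, smul_eq_mul]
  exact congrArg _ (det_piecewise_one_eq_submatrix_det S I)

theorem det_one_add_diagonal_mul_eq_one {S : Matrix κ κ ℂ}
    (hS : ∀ I : Finset κ, I.Nonempty → principalMinor S I = 0) (g : κ → ℂ) :
    det (1 + diagonal g * S) = 1 := by
  rw [det_one_add_diagonal_mul, sum_eq_single_of_mem ∅ (mem_univ _) fun I _ hI => by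
    rw [hS I (nonempty_iff_ne_empty.2 hI), mul_zero]]
  simp [principalMinor_empty]

theorem det_one_add_diagonal_indicator_mul (S : Matrix κ κ ℂ) (J : Finset κ) :
    det (1 + diagonal (fun k => if k ∈ J then 1 else 0) * S) =
      ∑ I ∈ J.powerset, principalMinor S I := by
  rw [det_one_add_diagonal_mul]
  simp only [prod_boole, boole_mul, ← subset_iff]
  rw [sum_ite, sum_const_zero, add_zero]
  congr 1
  ext I
  simp

end Minors

theorem Polynomial.exists_derivative_eq {K : Type*} [Field K] [CharZero K] (ψ : K[X]) :
    ∃ Ψ : K[X], derivative Ψ = ψ := by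
  induction ψ using Polynomial.induction_on' with
  | add p q hp hq =>
    obtain ⟨P, rfl⟩ := hp
    obtain ⟨Q, rfl⟩ := hq
    exact ⟨P + Q, derivative_add⟩
  | monomial n a =>
    refine ⟨C (a / (n + 1)) * X ^ (n + 1), ?_⟩
    rw [derivative_C_mul_X_pow, ← C_mul_X_pow_eq_monomial]
    push_cast
    field_simp

theorem Polynomial.exists_derivative_eval_eq {K : Type*} [Field K] [CharZero K] [DecidableEq K]
    (s : Finset K) (e : K → K) : ∃ Ψ : K[X], ∀ z ∈ s, (derivative Ψ).eval z = e z := by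
  obtain ⟨Ψ, hΨ⟩ := exists_derivative_eq (Lagrange.interpolate s id e)
  exact ⟨Ψ, fun z hz => hΨ ▸ Lagrange.eval_interpolate_at_node e (Set.injOn_id _) hz⟩

theorem exists_injOn_dotProduct {K n : Type*} [Field K] [Infinite K] [Fintype n] [DecidableEq n]
    {s : Set (n → K)} (hs : s.Finite) : ∃ x : n → K, s.InjOn (· ⬝ᵥ x) := by
  have : Finite s := hs.to_subtype
  obtain ⟨f, hf⟩ := Module.exists_dual_forall_apply_ne_zero (K := K)
    (fun p : {p : s × s // p.1 ≠ p.2} => (p.1.1 : n → K) - p.1.2)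
    fun p => sub_ne_zero.2 (Subtype.coe_injective.ne p.2)
  refine ⟨(dotProductEquiv K n).symm f, fun a ha b hb hab => by_contra fun hne =>
    hf ⟨(⟨a, ha⟩, ⟨b, hb⟩), fun h => hne (congrArg Subtype.val h)⟩ ?_⟩
  rw [← (dotProductEquiv K n).apply_symm_apply f]
  simp only [dotProductEquiv_apply_apply, dotProduct_sub, dotProduct_comm _ a,
    dotProduct_comm _ b]
  exact sub_eq_zero.2 hab

section Jacobian

variable {ι : Type*} [Fintype ι] [DecidableEq ι]

theorem hasFDerivAt_phiMap (A : Matrix ι ι ℂ) (φ : ℂ → ℂ) (x : ι → ℂ)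
    (hφ : ∀ j, DifferentiableAt ℂ φ ((A *ᵥ x) j)) :
    HasFDerivAt (phiMap A φ)
      (toLin' (1 + diagonal (fun j => deriv φ ((A *ᵥ x) j)) * A)).toContinuousLinearMap x := by
  rw [hasFDerivAt_pi']
  intro j
  have hAx : HasFDerivAt (fun y : ι → ℂ => (A *ᵥ y) j)
      ((ContinuousLinearMap.proj j).comp (toLin' A).toContinuousLinearMap) x :=
    ((ContinuousLinearMap.proj j).comp (toLin' A).toContinuousLinearMap).hasFDerivAt
  convert (hasFDerivAt_apply j x).add ((hφ j).hasDerivAt.comp_hasFDerivAt x hAx) using 1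
  · rfl
  · ext y
    simp only [map_add, toLin'_one, toLin'_mul, ContinuousLinearMap.comp_add, _root_.add_apply,
      ContinuousLinearMap.comp_apply, LinearMap.coe_toContinuousLinearMap', LinearMap.id_coe,
      id_eq, ContinuousLinearMap.proj_apply, LinearMap.coe_comp, Function.comp_apply,
      toLin'_apply, _root_.smul_apply, smul_eq_mul, mulVec_diagonal]

theorem jacDet_phiMap (A : Matrix ι ι ℂ) (φ : ℂ → ℂ) (x : ι → ℂ)
    (hφ : ∀ j, DifferentiableAt ℂ φ ((A *ᵥ x) j)) :
    jacDet (phiMap A φ) x = det (1 + diagonal (fun j => deriv φ ((A *ᵥ x) j)) * A) := by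
  rw [jacDet, (hasFDerivAt_phiMap A φ x hφ).fderiv, LinearMap.toMatrix_eq_toMatrix']
  exact congrArg det (LinearMap.toMatrix'_toLin' _)

end Jacobian

section BlockRowSum

variable {ι κ α : Type*} [Fintype ι] [DecidableEq κ] [CommRing α]

/-- The matrix `𝒮` of the paper when `R j` is the `j`-th distinct row and `β i` the block of the
index `i`. -/
def blockRowSum (R : Matrix κ ι α) (β : ι → κ) : Matrix κ κ α :=
  of fun j k => ∑ ℓ ∈ univ.filter (fun i => β i = k), R j ℓ

theorem blockRowSum_eq_mul (R : Matrix κ ι α) (β : ι → κ) :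
    blockRowSum R β = R * (1 : Matrix κ κ α).submatrix β id := by
  ext j k
  simp [blockRowSum, mul_apply, one_apply, sum_filter]

variable [Fintype κ] [DecidableEq ι]

theorem det_one_add_diagonal_comp_mul_submatrix (R : Matrix κ ι α) (β : ι → κ) (g : κ → α) :
    det (1 + diagonal (g ∘ β) * R.submatrix β id) = det (1 + diagonal g * blockRowSum R β) := by
  set P : Matrix ι κ α := (1 : Matrix κ κ α).submatrix β id
  have hP : diagonal (g ∘ β) * P = P * diagonal g := by
    ext i k
    by_cases h : β i = k <;> simp [P, one_apply, h]
  calc det (1 + diagonal (g ∘ β) * R.submatrix β id)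
      = det (1 + P * (diagonal g * R)) := by
        rw [show R.submatrix β id = P * R from (one_submatrix_mul β (Equiv.refl κ) R).symm,
          ← Matrix.mul_assoc, hP, Matrix.mul_assoc]
    _ = det (1 + diagonal g * R * P) := det_one_add_mul_comm _ _
    _ = det (1 + diagonal g * blockRowSum R β) := by rw [blockRowSum_eq_mul, Matrix.mul_assoc]

end BlockRowSum

section Universal

variable {ι κ : Type*} [Fintype ι] [DecidableEq ι] [Fintype κ] [DecidableEq κ]

theorem jacDet_phiMap_submatrix (R : Matrix κ ι ℂ) (β : ι → κ) (φ : ℂ → ℂ) (x : ι → ℂ)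
    (hφ : ∀ j, DifferentiableAt ℂ φ ((R *ᵥ x) (β j))) :
    jacDet (phiMap (R.submatrix β id) φ) x =
      det (1 + diagonal (fun k => deriv φ ((R *ᵥ x) k)) * blockRowSum R β) := by
  rw [jacDet_phiMap (R.submatrix β id) φ x hφ,
    ← det_one_add_diagonal_comp_mul_submatrix R β fun k => deriv φ ((R *ᵥ x) k)]
  rfl

theorem IsUniversal.sum_powerset_principalMinor_blockRowSum_eq_one {R : Matrix κ ι ℂ}
    {β : ι → κ} (hU : IsUniversal (R.submatrix β id)) (hR : Function.Injective R)
    {J : Finset κ} (hJ : ∀ k ∈ J, R k ≠ 0) :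
    ∑ I ∈ J.powerset, principalMinor (blockRowSum R β) I = 1 := by
  obtain ⟨x₀, hx₀⟩ := exists_injOn_dotProduct ((Set.finite_range R).insert 0)
  set v := R *ᵥ x₀
  have hv : ∀ k, v k ∈ J.image v ↔ k ∈ J := fun k =>
    ⟨fun h => by
      obtain ⟨k', hk', hkk'⟩ := mem_image.1 h
      rwa [← hR (hx₀ (Or.inr ⟨k', rfl⟩) (Or.inr ⟨k, rfl⟩) hkk')],
     mem_image_of_mem v⟩
  have h0 : (0 : ℂ) ∉ J.image v := fun h => by
    obtain ⟨k, hk, hk0⟩ := mem_image.1 h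
    exact hJ k hk (hx₀ (Or.inr ⟨k, rfl⟩) (Or.inl rfl) (hk0.trans (zero_dotProduct x₀).symm))
  obtain ⟨Ψ, hΨ⟩ := exists_derivative_eval_eq (insert 0 (univ.image v))
    fun z => if z ∈ J.image v then 1 else 0
  obtain ⟨c, -, hc⟩ := hU Set.univ (fun z => Ψ.eval z) isOpen_univ Set.univ_nonempty
    isPreconnected_univ (AnalyticOnNhd.eval_polynomial Ψ).analyticOn ⟨0, fun _ => trivial⟩
  have hdiff : ∀ x j, DifferentiableAt ℂ (fun z => Ψ.eval z) ((R *ᵥ x) (β j)) :=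
    fun _ _ => Ψ.differentiableAt
  have hjac_zero : jacDet (phiMap (R.submatrix β id) fun z => Ψ.eval z) 0 = 1 := by
    rw [jacDet_phiMap_submatrix R β _ 0 (hdiff 0)]
    simp [Polynomial.deriv, hΨ 0 (mem_insert_self _ _), h0]
  have hjac_x₀ : jacDet (phiMap (R.submatrix β id) fun z => Ψ.eval z) x₀ =
      ∑ I ∈ J.powerset, principalMinor (blockRowSum R β) I := by
    rw [jacDet_phiMap_submatrix R β _ x₀ (hdiff x₀), ← det_one_add_diagonal_indicator_mul]
    congr
    ext k
    rw [Polynomial.deriv, hΨ _ (mem_insert_of_mem (mem_image_of_mem v (mem_univ k)))]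
    exact if_congr (hv k) rfl rfl
  rw [← hjac_x₀, hc x₀ fun _ => trivial, ← hc 0 fun _ => trivial, hjac_zero]

theorem isUniversal_submatrix_iff {R : Matrix κ ι ℂ} (β : ι → κ) (hR : Function.Injective R) :
    IsUniversal (R.submatrix β id) ↔
      ∀ I : Finset κ, I.Nonempty → principalMinor (blockRowSum R β) I = 0 := by
  classical
  constructor
  · intro hU I hI
    by_cases hIR : ∃ k ∈ I, R k = 0
    · obtain ⟨k, hk, hRk⟩ := hIR
      refine principalMinor_eq_zero_of_row_eq_zero hk (funext fun j => ?_)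
      simp [blockRowSum, hRk]
    · refine eq_zero_of_sum_powerset_eq (K := univ.filter fun k => R k ≠ 0) (fun J hJ => ?_)
        (fun k hk => mem_filter.2 ⟨mem_univ k, fun h => hIR ⟨k, hk, h⟩⟩) hI
      rw [hU.sum_powerset_principalMinor_blockRowSum_eq_one hR
        fun k hk => (mem_filter.1 (hJ hk)).2, principalMinor_empty]
  · intro hS Ω φ hΩ _ _ hφ _
    have hφ' := hΩ.analyticOn_iff_analyticOnNhd.1 hφ
    refine ⟨1, one_ne_zero, fun x hx => ?_⟩
    rw [jacDet_phiMap_submatrix R β φ x fun j => (hφ' _ (hx j)).differentiableAt]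
    exact det_one_add_diagonal_mul_eq_one hS _

end Universal

theorem stmt9_general (n m : ℕ) (A : Matrix (Fin n) (Fin n) ℂ)
    (β : Fin n → Fin m) (r : Fin m → Fin n)
    (hrows : ∀ i₁ i₂ : Fin n, A i₁ = A i₂ ↔ β i₁ = β i₂)
    (hr : ∀ j, β (r j) = j) :
    IsUniversal A ↔ ∀ I : Finset (Fin m), I.Nonempty →
      principalMinor (Matrix.of fun j k : Fin m =>
        ∑ ℓ ∈ Finset.univ.filter (fun i => β i = k), A (r j) ℓ) I = 0 := by
  have hA : (A.submatrix r id).submatrix β id = A := by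
    ext i ℓ
    exact congrFun ((hrows _ _).2 (hr (β i))) ℓ
  have hR : Function.Injective (A.submatrix r id) := fun j k h => by
    simpa only [hr] using (hrows (r j) (r k)).1 h
  have := isUniversal_submatrix_iff β hR
  rwa [hA] at this

theorem stmt9 (n m : ℕ) (A : Matrix (Fin n) (Fin n) ℂ) (p : Fin m → ℕ)
    (β : Fin n → Fin m) (r : Fin m → Fin n)
    (hβmono : Monotone β)
    (hpmono : Monotone p)
    (hppos : ∀ j, 0 < p j)
    (hcard : ∀ j, (Finset.univ.filter (fun i => β i = j)).card = p j)
    (hrows : ∀ i₁ i₂ : Fin n, A i₁ = A i₂ ↔ β i₁ = β i₂)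
    (hr : ∀ j, β (r j) = j) :
    IsUniversal A ↔ ∀ I : Finset (Fin m), I.Nonempty →
      principalMinor (Matrix.of fun j k : Fin m =>
        ∑ ℓ ∈ Finset.univ.filter (fun i => β i = k), A (r j) ℓ) I = 0 :=
  stmt9_general n m A β r hrows hr
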